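/- For every integer n ≥ 2, let S' = {ξ_(1,i) : 2 ≤ i ≤ n} ∪ {ξ_(j,1) : 2 ≤ j ≤ n}. Then S' ∪ T is an independent generating set of A^+(B_n) of cardinality n·(n!) + 2n − 2. -/

import Mathlib

/-- The Brandt semigroup `B_n`, modeled as `Option (Fin n × Fin n)` where
`none` plays the role of the (two-sided) zero element `ϑ`. -/
def Brandt (n : ℕ) : Type := Option (Fin n × Fin n)

instance (n : ℕ) : DecidableEq (Brandt n) :=
  inferInstanceAs (DecidableEq (Option (Fin n × Fin n)))

instance (n : ℕ) : Fintype (Brandt n) :=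
  inferInstanceAs (Fintype (Option (Fin n × Fin n)))

namespace Brandt

/-- The zero element `ϑ` of `B_n`. -/
def theta (n : ℕ) : Brandt n := none

/-- The element `(i, j)` of `B_n`. -/
def pair {n : ℕ} (i j : Fin n) : Brandt n := some (i, j)

/-- The addition of the Brandt semigroup:
`(i,j) + (k,l) = (i,l)` if `j = k` and `ϑ` otherwise; `ϑ` is absorbing. -/
def add {n : ℕ} : Option (Fin n × Fin n) → Option (Fin n × Fin n) → Option (Fin n × Fin n)
  | some (i, j), some (k, l) => if j = k then some (i, l) else none
  | _, _ => none

instance (n : ℕ) : Add (Brandt n) := ⟨fun a b => Brandt.add a b⟩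

end Brandt

/-- `M(B_n)`: all self-maps of `B_n`, with pointwise addition. -/
abbrev MB (n : ℕ) := Brandt n → Brandt n

/-- `g` is an endomorphism of `(B_n, +)`. -/
def IsEndo {n : ℕ} (g : MB n) : Prop := ∀ a b : Brandt n, g (a + b) = g a + g b

/-- `g` is an automorphism of `(B_n, +)`. -/
def IsAuto {n : ℕ} (g : MB n) : Prop := IsEndo g ∧ Function.Bijective g

/-- The constant map `ξ_c` on `B_n` with value `c`. -/
def xi {n : ℕ} (c : Brandt n) : MB n := fun _ => c

/-- `C_{B_n}`, the set of all constant maps on `B_n`. -/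
def ConstMaps (n : ℕ) : Set (MB n) := {f | ∃ c : Brandt n, f = xi c}

/-- `f` is an affine map: a sum of an endomorphism and a constant map. -/
def IsAffine {n : ℕ} (f : MB n) : Prop := ∃ g c, IsEndo g ∧ f = g + xi c

/-- `A^+(B_n)`: the subsemigroup of `(M(B_n), +)` generated by the affine maps. -/
def Aplus (n : ℕ) : AddSubsemigroup (MB n) := AddSubsemigroup.closure {f | IsAffine f}

/-- `A^+(B_n)` as a set of maps. -/
def AplusSet (n : ℕ) : Set (MB n) := (Aplus n : Set (MB n))

/-- The support of `f`: the set of elements not mapped to `ϑ`. -/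
def supp {n : ℕ} (f : MB n) : Set (Brandt n) := {a | f a ≠ Brandt.theta n}

/-- `X_k`: the set of `k`-support elements of `X`. -/
def supportPart {n : ℕ} (X : Set (MB n)) (k : ℕ) : Set (MB n) :=
  {f ∈ X | (supp f).ncard = k}

/-- A subset `U` of an additive semigroup is independent if no element of `U`
lies in the subsemigroup generated by the remaining elements of `U`. -/
def IndepSet {β : Type*} [Add β] (U : Set β) : Prop :=
  ∀ a ∈ U, a ∉ AddSubsemigroup.closure (U \ {a})

/-- The `n`-support map `(p, q; σ)`, sending `(i, p)` to `(iσ, q)` and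
everything else to `ϑ`. -/
def nMap {n : ℕ} (p q : Fin n) (σ : Equiv.Perm (Fin n)) : MB n := fun a =>
  Option.elim (α := Fin n × Fin n) a (Brandt.theta n)
    (fun x => if x.2 = p then Brandt.pair (σ x.1) q else Brandt.theta n)

/-- The singleton support map `⟨(k, l), α⟩`, sending `(k, l)` to `α` and
everything else to `ϑ`. -/
def sMap {n : ℕ} (k l : Fin n) (α : Brandt n) : MB n :=
  fun a => if a = Brandt.pair k l then α else Brandt.theta n

/-- The set `S = {ξ_(i, i+1) : i ∈ [n-1]} ∪ {ξ_(n, 1)}`, i.e. the constant maps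
`ξ_(i, i+1)` where the successor is taken cyclically in `[n]`. -/
def setS (n : ℕ) : Set (MB n) := {f | ∃ i : Fin n, f = xi (Brandt.pair i (finRotate n i))}

/-- The set `T = {g + h : g ∈ Aut(B_n), h ∈ S}`. -/
def setT (n : ℕ) : Set (MB n) := {f | ∃ g h, IsAuto g ∧ h ∈ setS n ∧ f = g + h}
namespace StmtAux
open Brandt Equiv

variable {n : ℕ}

/-! ### Basic computation lemmas -/

theorem brandt_cases (a : Brandt n) : a = theta n ∨ ∃ i j, a = pair i j := by
  rcases a with _ | ⟨i, j⟩
  · exact Or.inl rfl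
  · exact Or.inr ⟨i, j, rfl⟩

theorem theta_add (x : Brandt n) : theta n + x = theta n := by
  rcases x with _ | ⟨i, j⟩ <;> rfl

theorem add_theta (x : Brandt n) : x + theta n = theta n := by
  rcases x with _ | ⟨i, j⟩ <;> rfl

theorem pair_add_pair (i j k l : Fin n) :
    (pair i j : Brandt n) + pair k l = if j = k then pair i l else theta n := rfl

theorem pair_ne_theta (i j : Fin n) : (pair i j : Brandt n) ≠ theta n := by
  intro h; exact Option.some_ne_none (i, j) h

theorem pair_inj {i j k l : Fin n} (h : (pair i j : Brandt n) = pair k l) :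
    i = k ∧ j = l := by
  have h' : some (i, j) = some (k, l) := h
  simpa [Prod.ext_iff] using h'

theorem xi_apply (c : Brandt n) (a : Brandt n) : xi c a = c := rfl

theorem xi_inj {c d : Brandt n} (h : (xi c : MB n) = xi d) : c = d :=
  congrFun h (theta n)

theorem xi_add_xi (c d : Brandt n) : (xi c : MB n) + xi d = xi (c + d) := rfl

theorem xi_theta_add (f : MB n) : xi (theta n) + f = xi (theta n) :=
  funext fun a => theta_add (f a)

theorem add_xi_theta (f : MB n) : f + xi (theta n) = xi (theta n) :=
  funext fun a => add_theta (f a)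

theorem sMap_apply_self (k l : Fin n) (α : Brandt n) :
    sMap k l α (pair k l) = α := by simp [sMap]

theorem sMap_apply_ne (k l : Fin n) (α : Brandt n) {a : Brandt n} (h : a ≠ pair k l) :
    sMap k l α a = theta n := by simp [sMap, h]

theorem nMap_apply_pair (p q : Fin n) (σ : Perm (Fin n)) (i j : Fin n) :
    nMap p q σ (pair i j) = if j = p then pair (σ i) q else theta n := rfl

theorem nMap_apply_theta (p q : Fin n) (σ : Perm (Fin n)) :
    nMap p q σ (theta n) = theta n := rfl

theorem sMap_theta (k l : Fin n) : sMap k l (theta n) = xi (theta n) := by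
  funext a; simp [sMap, xi]

/-! ### Addition formulas -/

theorem add_sMap (f : MB n) (k l : Fin n) (α : Brandt n) :
    f + sMap k l α = sMap k l (f (pair k l) + α) := by
  funext a
  by_cases h : a = pair k l
  · subst h
    show f (pair k l) + sMap k l α (pair k l) = _
    rw [sMap_apply_self, sMap_apply_self]
  · show f a + sMap k l α a = _
    rw [sMap_apply_ne _ _ _ h, sMap_apply_ne _ _ _ h, add_theta]

theorem sMap_add (f : MB n) (k l : Fin n) (α : Brandt n) :
    sMap k l α + f = sMap k l (α + f (pair k l)) := by
  funext a
  by_cases h : a = pair k l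
  · subst h
    show sMap k l α (pair k l) + f (pair k l) = _
    rw [sMap_apply_self, sMap_apply_self]
  · show sMap k l α a + f a = _
    rw [sMap_apply_ne _ _ _ h, sMap_apply_ne _ _ _ h, theta_add]

theorem xi_add_nMap (u v p q : Fin n) (σ : Perm (Fin n)) :
    (xi (pair u v) : MB n) + nMap p q σ = sMap (σ.symm v) p (pair u q) := by
  funext a
  show (pair u v : Brandt n) + nMap p q σ a = sMap (σ.symm v) p (pair u q) a
  rcases a with _ | ⟨i, j⟩
  · rw [show (none : Brandt n) = theta n from rfl, nMap_apply_theta, add_theta,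
      sMap_apply_ne _ _ _ (pair_ne_theta _ _).symm]
  · show (pair u v : Brandt n) + nMap p q σ (pair i j) = sMap (σ.symm v) p (pair u q) (pair i j)
    rw [nMap_apply_pair]
    by_cases hj : j = p
    · subst hj
      rw [if_pos rfl, pair_add_pair]
      by_cases hv : v = σ i
      · have hi : i = σ.symm v := by rw [hv]; simp
        subst hi
        rw [if_pos hv, sMap_apply_self]
      · have hi : (pair i j : Brandt n) ≠ pair (σ.symm v) j := by
          intro h
          exact hv (by rw [(pair_inj h).1]; simp)
        rw [if_neg hv, sMap_apply_ne _ _ _ hi]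
    · rw [if_neg hj, add_theta, sMap_apply_ne]
      intro h
      exact hj (pair_inj h).2

theorem nMap_add_xi_eq (p q v : Fin n) (σ : Perm (Fin n)) :
    nMap p q σ + (xi (pair q v) : MB n) = nMap p v σ := by
  funext a
  show nMap p q σ a + (pair q v : Brandt n) = nMap p v σ a
  rcases a with _ | ⟨i, j⟩
  · rw [show (none : Brandt n) = theta n from rfl, nMap_apply_theta, nMap_apply_theta, theta_add]
  · show nMap p q σ (pair i j) + (pair q v : Brandt n) = nMap p v σ (pair i j)
    rw [nMap_apply_pair, nMap_apply_pair]
    by_cases hj : j = p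
    · rw [if_pos hj, if_pos hj, pair_add_pair, if_pos rfl]
    · rw [if_neg hj, if_neg hj, theta_add]

theorem nMap_add_xi_ne (p q u v : Fin n) (σ : Perm (Fin n)) (h : u ≠ q) :
    nMap p q σ + (xi (pair u v) : MB n) = xi (theta n) := by
  funext a
  show nMap p q σ a + (pair u v : Brandt n) = theta n
  rcases a with _ | ⟨i, j⟩
  · rw [show (none : Brandt n) = theta n from rfl, nMap_apply_theta, theta_add]
  · show nMap p q σ (pair i j) + (pair u v : Brandt n) = theta n
    rw [nMap_apply_pair]
    by_cases hj : j = p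
    · rw [if_pos hj, pair_add_pair, if_neg (fun hh => h hh.symm)]
    · rw [if_neg hj, theta_add]

theorem nMap_add_nMap_eq (p q q' : Fin n) (σ σ' : Perm (Fin n)) :
    nMap p q σ + nMap p q' σ' = sMap (σ'.symm q) p (pair (σ (σ'.symm q)) q') := by
  funext a
  show nMap p q σ a + nMap p q' σ' a = _
  rcases a with _ | ⟨i, j⟩
  · rw [show (none : Brandt n) = theta n from rfl, nMap_apply_theta, nMap_apply_theta, theta_add,
      sMap_apply_ne _ _ _ (pair_ne_theta _ _).symm]
  · show nMap p q σ (pair i j) + nMap p q' σ' (pair i j) = sMap (σ'.symm q) p _ (pair i j)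
    rw [nMap_apply_pair, nMap_apply_pair]
    by_cases hj : j = p
    · subst hj
      rw [if_pos rfl, if_pos rfl, pair_add_pair]
      by_cases hq : q = σ' i
      · have hi : i = σ'.symm q := by rw [hq]; simp
        subst hi
        rw [if_pos hq, sMap_apply_self]
      · rw [if_neg hq, sMap_apply_ne]
        intro h
        exact hq (by rw [(pair_inj h).1]; simp)
    · rw [if_neg hj, theta_add, sMap_apply_ne]
      intro h
      exact hj (pair_inj h).2

theorem nMap_add_nMap_ne (p p' q q' : Fin n) (σ σ' : Perm (Fin n)) (h : p ≠ p') :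
    nMap p q σ + nMap p' q' σ' = xi (theta n) := by
  funext a
  show nMap p q σ a + nMap p' q' σ' a = theta n
  rcases a with _ | ⟨i, j⟩
  · rw [show (none : Brandt n) = theta n from rfl, nMap_apply_theta, theta_add]
  · show nMap p q σ (pair i j) + nMap p' q' σ' (pair i j) = theta n
    rw [nMap_apply_pair, nMap_apply_pair]
    by_cases hj : j = p
    · rw [if_pos hj, if_neg (hj ▸ h), add_theta]
    · rw [if_neg hj, theta_add]

/-! ### Distinctness lemmas -/

theorem xi_ne_nMap (c : Brandt n) (p q : Fin n) (σ : Perm (Fin n)) :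
    (xi c : MB n) ≠ nMap p q σ := by
  intro h
  rcases c with _ | ⟨u, v⟩
  · have := congrFun h (pair p p)
    rw [nMap_apply_pair, if_pos rfl] at this
    exact pair_ne_theta (σ p) q (this.symm)
  · have := congrFun h (theta n)
    rw [nMap_apply_theta] at this
    exact pair_ne_theta u v this

theorem sMap_ne_nMap (hn : 2 ≤ n) (k l : Fin n) (α : Brandt n) (p q : Fin n)
    (σ : Perm (Fin n)) : sMap k l α ≠ nMap p q σ := by
  intro h
  have : Nontrivial (Fin n) := Fin.nontrivial_iff_two_le.mpr hn
  obtain ⟨j, hj⟩ := exists_ne k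
  have := congrFun h (pair j p)
  rw [nMap_apply_pair, if_pos rfl, sMap_apply_ne] at this
  · exact pair_ne_theta (σ j) q this.symm
  · intro hh
    exact hj (pair_inj hh).1

theorem nMap_inj {p p' q q' : Fin n} {σ σ' : Perm (Fin n)}
    (h : (nMap p q σ : MB n) = nMap p' q' σ') : p = p' ∧ q = q' ∧ σ = σ' := by
  have hp : p = p' := by
    by_contra hp
    have := congrFun h (pair p p)
    rw [nMap_apply_pair, nMap_apply_pair, if_pos rfl, if_neg hp] at this
    exact pair_ne_theta _ _ this
  subst hp
  have key : ∀ i : Fin n, (pair (σ i) q : Brandt n) = pair (σ' i) q' := by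
    intro i
    have := congrFun h (pair i p)
    rwa [nMap_apply_pair, nMap_apply_pair, if_pos rfl, if_pos rfl] at this
  constructor
  · rfl
  constructor
  · exact (pair_inj (key p)).2
  · exact Equiv.ext fun i => (pair_inj (key i)).1

end StmtAux
namespace StmtAux
open Brandt Equiv

variable {n : ℕ}

/-! ### Automorphisms -/

/-- The automorphism of `B_n` induced by a permutation. -/
def autMap (σ : Perm (Fin n)) : MB n := fun a =>
  Option.map (fun x : Fin n × Fin n => (σ x.1, σ x.2)) a

theorem autMap_apply_pair (σ : Perm (Fin n)) (i j : Fin n) :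
    autMap σ (pair i j) = pair (σ i) (σ j) := rfl

theorem autMap_apply_theta (σ : Perm (Fin n)) : autMap σ (theta n) = theta n := rfl

theorem autMap_isEndo (σ : Perm (Fin n)) : IsEndo (autMap σ) := by
  intro a b
  rcases a with _ | ⟨i, j⟩
  · rw [show (none : Brandt n) = theta n from rfl, theta_add, autMap_apply_theta, theta_add]
  · rcases b with _ | ⟨k, l⟩
    · show autMap σ ((pair i j : Brandt n) + theta n) = autMap σ (pair i j) + autMap σ (theta n)
      rw [add_theta, autMap_apply_theta, add_theta]
    · show autMap σ ((pair i j : Brandt n) + pair k l)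
          = autMap σ (pair i j) + autMap σ (pair k l)
      rw [pair_add_pair, autMap_apply_pair, autMap_apply_pair, pair_add_pair]
      by_cases h : j = k
      · rw [if_pos h, if_pos (by rw [h]), autMap_apply_pair]
      · rw [if_neg h, if_neg (fun hh => h (σ.injective hh)), autMap_apply_theta]

theorem autMap_bijective (σ : Perm (Fin n)) : Function.Bijective (autMap σ) := by
  have hli : Function.LeftInverse (autMap σ.symm) (autMap σ) := by
    intro a
    rcases a with _ | ⟨i, j⟩
    · rfl
    · show autMap σ.symm (pair (σ i) (σ j)) = pair i j
      rw [autMap_apply_pair]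
      simp
  have hri : Function.RightInverse (autMap σ.symm) (autMap σ) := by
    intro a
    rcases a with _ | ⟨i, j⟩
    · rfl
    · show autMap σ (pair (σ.symm i) (σ.symm j)) = pair i j
      rw [autMap_apply_pair]
      simp
  exact Function.bijective_iff_has_inverse.mpr ⟨autMap σ.symm, hli, hri⟩

theorem autMap_isAuto (σ : Perm (Fin n)) : IsAuto (autMap σ) :=
  ⟨autMap_isEndo σ, autMap_bijective σ⟩

theorem autMap_add_xi (σ : Perm (Fin n)) (k l : Fin n) :
    autMap σ + (xi (pair k l) : MB n) = nMap (σ.symm k) l σ := by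
  funext a
  show autMap σ a + (pair k l : Brandt n) = nMap (σ.symm k) l σ a
  rcases a with _ | ⟨i, j⟩
  · rw [show (none : Brandt n) = theta n from rfl, autMap_apply_theta, theta_add,
      nMap_apply_theta]
  · show autMap σ (pair i j) + (pair k l : Brandt n) = nMap (σ.symm k) l σ (pair i j)
    rw [autMap_apply_pair, pair_add_pair, nMap_apply_pair]
    by_cases h : σ j = k
    · rw [if_pos h, if_pos (by rw [← h]; simp)]
    · rw [if_neg h, if_neg (fun hh => h (by rw [hh]; simp))]

/-! ### Classification of endomorphisms -/

theorem endo_classify {g : MB n} (hg : IsEndo g) :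
    (∃ p, g = xi (pair p p)) ∨ g = xi (theta n) ∨ ∃ σ : Perm (Fin n), g = autMap σ := by
  have hθθ : g (theta n) = g (theta n) + g (theta n) := by
    have := hg (theta n) (theta n)
    rwa [theta_add] at this
  -- every idempotent-forced value
  have idem : ∀ x : Brandt n, x = x + x → x = theta n ∨ ∃ p, x = pair p p := by
    intro x hx
    rcases brandt_cases x with rfl | ⟨u, v, rfl⟩
    · exact Or.inl rfl
    · right
      rw [pair_add_pair] at hx
      by_cases h : v = u
      · exact ⟨u, by rw [h]⟩
      · rw [if_neg h] at hx
        exact absurd hx (pair_ne_theta u v)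
  rcases idem _ hθθ with hθ | ⟨p, hθ⟩
  · -- g ϑ = ϑ
    by_cases hD : ∀ i, g (pair i i) = theta n
    · -- g is the zero map
      right; left
      funext a
      rcases a with _ | ⟨i, j⟩
      · exact hθ
      · have := hg (pair i i) (pair i j)
        rw [show (pair i i : Brandt n) + pair i j = pair i j by
          rw [pair_add_pair, if_pos rfl], hD i, theta_add] at this
        exact this
    · right; right
      push_neg at hD
      obtain ⟨i₀, hi₀⟩ := hD
      -- diagonal values are idempotent
      have hdiag : ∀ i, g (pair i i) = theta n ∨ ∃ p, g (pair i i) = pair p p := by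
        intro i
        refine idem _ ?_
        have := hg (pair i i) (pair i i)
        rwa [show (pair i i : Brandt n) + pair i i = pair i i by
          rw [pair_add_pair, if_pos rfl]] at this
      obtain ⟨p₀, hp₀⟩ : ∃ p, g (pair i₀ i₀) = pair p p := by
        rcases hdiag i₀ with h | h
        · exact absurd h hi₀
        · exact h
      -- all diagonal values are nonzero
      have htot : ∀ j, ∃ p, g (pair j j) = pair p p := by
        intro j
        have h1 := hg (pair i₀ j) (pair j i₀)
        rw [show (pair i₀ j : Brandt n) + pair j i₀ = pair i₀ i₀ by
          rw [pair_add_pair, if_pos rfl], hp₀] at h1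
        -- g (i₀ j) and g (j i₀) are both pairs
        rcases brandt_cases (g (pair i₀ j)) with h2 | ⟨a, b, h2⟩
        · rw [h2, theta_add] at h1; exact absurd h1 (pair_ne_theta _ _)
        rcases brandt_cases (g (pair j i₀)) with h3 | ⟨b', c, h3⟩
        · rw [h3, add_theta] at h1; exact absurd h1 (pair_ne_theta _ _)
        rw [h2, h3, pair_add_pair] at h1
        by_cases hb : b = b'
        · rw [if_pos hb] at h1
          obtain ⟨hap, hcp⟩ := pair_inj h1.symm
          have h4 := hg (pair j i₀) (pair i₀ j)
          rw [show (pair j i₀ : Brandt n) + pair i₀ j = pair j j by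
            rw [pair_add_pair, if_pos rfl], h2, h3, pair_add_pair,
            if_pos (hcp.trans hap.symm)] at h4
          refine ⟨b', ?_⟩
          rw [h4, hb]
        · rw [if_neg hb] at h1
          exact absurd h1 (pair_ne_theta _ _)
      choose τ hτ using htot
      -- τ is injective
      have hinj : Function.Injective τ := by
        intro i j hij
        by_contra hne
        have := hg (pair i i) (pair j j)
        rw [show (pair i i : Brandt n) + pair j j = theta n by
          rw [pair_add_pair, if_neg hne], hθ, hτ, hτ, pair_add_pair, if_pos hij] at this
        exact pair_ne_theta _ _ this.symm
      have hbij := Finite.injective_iff_bijective.mp hinj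
      refine ⟨Equiv.ofBijective τ hbij, ?_⟩
      -- off-diagonal values
      have hoff : ∀ i j, g (pair i j) = pair (τ i) (τ j) := by
        intro i j
        -- nonzero
        obtain ⟨u, v, huv⟩ : ∃ u v, g (pair i j) = pair u v := by
          have h1 := hg (pair i j) (pair j i)
          rw [show (pair i j : Brandt n) + pair j i = pair i i by
            rw [pair_add_pair, if_pos rfl], hτ] at h1
          rcases brandt_cases (g (pair i j)) with h2 | ⟨u, v, h2⟩
          · rw [h2, theta_add] at h1; exact absurd h1 (pair_ne_theta _ _)
          · exact ⟨u, v, h2⟩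
        have hL := hg (pair i i) (pair i j)
        rw [show (pair i i : Brandt n) + pair i j = pair i j by
          rw [pair_add_pair, if_pos rfl], hτ, huv, pair_add_pair] at hL
        by_cases hti : τ i = u
        · rw [if_pos hti] at hL
          have hR := hg (pair i j) (pair j j)
          rw [show (pair i j : Brandt n) + pair j j = pair i j by
            rw [pair_add_pair, if_pos rfl], hτ, huv, pair_add_pair] at hR
          by_cases htj : v = τ j
          · rw [if_pos htj] at hR
            rw [huv, ← hti, htj]
          · rw [if_neg htj] at hR
            exact absurd hR (pair_ne_theta _ _)
        · rw [if_neg hti] at hL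
          exact absurd hL (pair_ne_theta _ _)
      funext a
      rcases a with _ | ⟨i, j⟩
      · exact hθ
      · exact hoff i j
  · -- g ϑ = (p, p): g is constant
    left
    refine ⟨p, funext fun a => ?_⟩
    have h1 := hg a (theta n)
    rw [add_theta, hθ] at h1
    rcases brandt_cases (g a) with h2 | ⟨u, v, h2⟩
    · rw [h2, theta_add] at h1
      exact absurd h1 (pair_ne_theta _ _)
    · rw [h2, pair_add_pair] at h1
      by_cases hv : v = p
      · rw [if_pos hv] at h1
        rw [h2, hv, (pair_inj h1.symm).1]
        rfl
      · rw [if_neg hv] at h1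
        exact absurd h1 (pair_ne_theta _ _)

theorem isAuto_iff (hn : 1 ≤ n) {g : MB n} :
    IsAuto g ↔ ∃ σ : Perm (Fin n), g = autMap σ := by
  constructor
  · rintro ⟨hendo, hbij⟩
    rcases endo_classify hendo with ⟨p, rfl⟩ | rfl | hσ
    · exfalso
      have : (theta n : Brandt n) = pair p p :=
        hbij.1 (rfl : xi (pair p p) (theta n) = xi (pair p p) (pair p p))
      exact pair_ne_theta p p this.symm
    · exfalso
      have z : Fin n := ⟨0, hn⟩
      have : (theta n : Brandt n) = pair z z :=
        hbij.1 (rfl : xi (theta n) (theta n) = xi (theta n) (pair z z))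
      exact pair_ne_theta z z this.symm
    · exact hσ
  · rintro ⟨σ, rfl⟩
    exact autMap_isAuto σ
end StmtAux
namespace StmtAux
open Brandt Equiv

variable {n : ℕ}

/-- The elements of `A⁺(Bₙ)`: constants, `n`-support maps and singleton maps. -/
def Good (n : ℕ) (f : MB n) : Prop :=
  (∃ c, f = xi c) ∨ (∃ p q σ, f = nMap p q σ) ∨ (∃ k l α, f = sMap k l α)

theorem good_add {f g : MB n} (hf : Good n f) (hg : Good n g) : Good n (f + g) := by
  rcases hg with ⟨c, rfl⟩ | ⟨p, q, σ, rfl⟩ | ⟨k, l, α, rfl⟩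
  · -- g = xi c
    rcases hf with ⟨d, rfl⟩ | ⟨p, q, σ, rfl⟩ | ⟨k, l, α, rfl⟩
    · exact Or.inl ⟨d + c, xi_add_xi d c⟩
    · rcases brandt_cases c with rfl | ⟨u, v, rfl⟩
      · exact Or.inl ⟨theta n, add_xi_theta _⟩
      · by_cases hu : u = q
        · subst hu
          exact Or.inr (Or.inl ⟨p, v, σ, nMap_add_xi_eq p u v σ⟩)
        · exact Or.inl ⟨theta n, nMap_add_xi_ne p q u v σ hu⟩
    · exact Or.inr (Or.inr ⟨k, l, _, sMap_add _ k l α⟩)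
  · -- g = nMap
    rcases hf with ⟨d, rfl⟩ | ⟨p', q', σ', rfl⟩ | ⟨k, l, α, rfl⟩
    · rcases brandt_cases d with rfl | ⟨u, v, rfl⟩
      · exact Or.inl ⟨theta n, xi_theta_add _⟩
      · exact Or.inr (Or.inr ⟨_, _, _, xi_add_nMap u v p q σ⟩)
    · by_cases hp : p' = p
      · subst hp
        exact Or.inr (Or.inr ⟨_, _, _, nMap_add_nMap_eq p' q' q σ' σ⟩)
      · exact Or.inl ⟨theta n, nMap_add_nMap_ne p' p q' q σ' σ hp⟩
    · exact Or.inr (Or.inr ⟨k, l, _, sMap_add _ k l α⟩)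
  · exact Or.inr (Or.inr ⟨k, l, _, add_sMap f k l α⟩)

/-- The subsemigroup of good maps. -/
def GoodSub (n : ℕ) : AddSubsemigroup (MB n) where
  carrier := {f | Good n f}
  add_mem' := good_add

theorem isAffine_good {f : MB n} (h : IsAffine f) : Good n f := by
  obtain ⟨g, c, hg, rfl⟩ := h
  rcases endo_classify hg with ⟨p, rfl⟩ | rfl | ⟨σ, rfl⟩
  · exact Or.inl ⟨pair p p + c, xi_add_xi _ _⟩
  · exact Or.inl ⟨theta n + c, xi_add_xi _ _⟩
  · rcases brandt_cases c with rfl | ⟨u, v, rfl⟩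
    · exact Or.inl ⟨theta n, add_xi_theta _⟩
    · exact Or.inr (Or.inl ⟨σ.symm u, v, σ, autMap_add_xi σ u v⟩)

theorem xi_isAffine (c : Brandt n) : IsAffine (xi c : MB n) := by
  rcases brandt_cases c with rfl | ⟨u, v, rfl⟩
  · refine ⟨xi (theta n), theta n, ?_, (add_xi_theta _).symm⟩
    intro a b
    exact (theta_add _).symm
  · refine ⟨xi (pair u u), pair u v, ?_, ?_⟩
    · intro a b
      show (pair u u : Brandt n) = pair u u + pair u u
      rw [pair_add_pair, if_pos rfl]
    · funext a
      show pair u v = (pair u u : Brandt n) + pair u v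
      rw [pair_add_pair, if_pos rfl]

theorem nMap_isAffine (p q : Fin n) (σ : Perm (Fin n)) : IsAffine (nMap p q σ) := by
  refine ⟨autMap σ, pair (σ p) q, autMap_isEndo σ, ?_⟩
  rw [autMap_add_xi]
  simp

theorem sMap_eq_nMap_add_nMap (k l x y : Fin n) :
    sMap k l (pair x y) = nMap l k (Equiv.swap k x) + nMap l y 1 := by
  rw [nMap_add_nMap_eq]
  simp only [Equiv.Perm.one_symm, Equiv.Perm.one_apply, Equiv.swap_apply_left]

theorem xi_mem_Aplus (c : Brandt n) : (xi c : MB n) ∈ Aplus n :=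
  AddSubsemigroup.subset_closure (xi_isAffine c)

theorem nMap_mem_Aplus (p q : Fin n) (σ : Perm (Fin n)) : nMap p q σ ∈ Aplus n :=
  AddSubsemigroup.subset_closure (nMap_isAffine p q σ)

theorem good_mem_Aplus {f : MB n} (h : Good n f) : f ∈ Aplus n := by
  rcases h with ⟨c, rfl⟩ | ⟨p, q, σ, rfl⟩ | ⟨k, l, α, rfl⟩
  · exact xi_mem_Aplus c
  · exact nMap_mem_Aplus p q σ
  · rcases brandt_cases α with rfl | ⟨x, y, rfl⟩
    · rw [sMap_theta]
      exact xi_mem_Aplus _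
    · rw [sMap_eq_nMap_add_nMap]
      exact AddSubsemigroup.add_mem _ (nMap_mem_Aplus _ _ _) (nMap_mem_Aplus _ _ _)

theorem aplus_le_good : Aplus n ≤ GoodSub n :=
  AddSubsemigroup.closure_le.mpr (fun f hf => isAffine_good hf)

theorem aplusSet_eq : AplusSet n = {f | Good n f} :=
  Set.Subset.antisymm (fun f hf => aplus_le_good hf) (fun f hf => good_mem_Aplus hf)

end StmtAux
namespace StmtAux
open Brandt Equiv

variable {n : ℕ}

/-- The set `S'` with distinguished index `z`. -/
def Sprime (n : ℕ) (z : Fin n) : Set (MB n) :=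
  {f | ∃ i : Fin n, i ≠ z ∧ (f = xi (pair z i) ∨ f = xi (pair i z))}

/-- T elements in nMap form. -/
theorem mem_setT_iff (hn : 1 ≤ n) {f : MB n} :
    f ∈ setT n ↔ ∃ (σ : Perm (Fin n)) (i : Fin n),
      f = nMap (σ.symm i) (finRotate n i) σ := by
  constructor
  · rintro ⟨g, h, hg, ⟨i, rfl⟩, rfl⟩
    obtain ⟨σ, rfl⟩ := (isAuto_iff hn).mp hg
    exact ⟨σ, i, (autMap_add_xi σ i (finRotate n i))⟩

  · rintro ⟨σ, i, rfl⟩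
    exact ⟨autMap σ, xi (pair i (finRotate n i)), autMap_isAuto σ, ⟨i, rfl⟩,
      (autMap_add_xi σ i (finRotate n i)).symm⟩

theorem xi_mem_closure (z : Fin n) (hn : 2 ≤ n) (c : Brandt n) :
    (xi c : MB n) ∈ AddSubsemigroup.closure (Sprime n z ∪ setT n) := by
  have hnt : Nontrivial (Fin n) := Fin.nontrivial_iff_two_le.mpr hn
  have base : ∀ i : Fin n, i ≠ z →
      (xi (pair z i) : MB n) ∈ AddSubsemigroup.closure (Sprime n z ∪ setT n) ∧
      (xi (pair i z) : MB n) ∈ AddSubsemigroup.closure (Sprime n z ∪ setT n) := by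
    intro i hi
    exact ⟨AddSubsemigroup.subset_closure (Or.inl ⟨i, hi, Or.inl rfl⟩),
      AddSubsemigroup.subset_closure (Or.inl ⟨i, hi, Or.inr rfl⟩)⟩
  obtain ⟨w, hw⟩ := exists_ne z
  rcases brandt_cases c with rfl | ⟨a, b, rfl⟩
  · -- ξ_ϑ = ξ_(z,w) + ξ_(z,w)
    have h1 := (base w hw).1
    have := AddSubsemigroup.add_mem _ h1 h1
    rwa [xi_add_xi, pair_add_pair, if_neg hw] at this
  · by_cases ha : a = z
    · subst ha
      by_cases hb : b = a
      · subst hb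
        -- ξ_(z,z) = ξ_(z,w) + ξ_(w,z)
        have := AddSubsemigroup.add_mem _ (base w hw).1 (base w hw).2
        rwa [xi_add_xi, pair_add_pair, if_pos rfl] at this
      · exact (base b hb).1
    · by_cases hb : b = z
      · subst hb
        exact (base a ha).2
      · -- ξ_(a,b) = ξ_(a,z) + ξ_(z,b)
        have := AddSubsemigroup.add_mem _ (base a ha).2 (base b hb).1
        rwa [xi_add_xi, pair_add_pair, if_pos rfl] at this

theorem nMap_mem_closure (z : Fin n) (hn : 2 ≤ n) (p q : Fin n) (σ : Perm (Fin n)) :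
    nMap p q σ ∈ AddSubsemigroup.closure (Sprime n z ∪ setT n) := by
  have ht : nMap p (finRotate n (σ p)) σ ∈ Sprime n z ∪ setT n := by
    right
    refine (mem_setT_iff (by omega : 1 ≤ n)).mpr ⟨σ, σ p, ?_⟩
    rw [Equiv.symm_apply_apply]
  have := AddSubsemigroup.add_mem _ (AddSubsemigroup.subset_closure ht)
    (xi_mem_closure z hn (pair (finRotate n (σ p)) q))
  rwa [nMap_add_xi_eq] at this

theorem good_mem_closure (z : Fin n) (hn : 2 ≤ n) {f : MB n} (h : Good n f) :
    f ∈ AddSubsemigroup.closure (Sprime n z ∪ setT n) := by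
  rcases h with ⟨c, rfl⟩ | ⟨p, q, σ, rfl⟩ | ⟨k, l, α, rfl⟩
  · exact xi_mem_closure z hn c
  · exact nMap_mem_closure z hn p q σ
  · rcases brandt_cases α with rfl | ⟨x, y, rfl⟩
    · rw [sMap_theta]
      exact xi_mem_closure z hn _
    · rw [sMap_eq_nMap_add_nMap]
      exact AddSubsemigroup.add_mem _ (nMap_mem_closure z hn _ _ _)
        (nMap_mem_closure z hn _ _ _)

end StmtAux
namespace StmtAux
open Brandt Equiv

variable {n : ℕ}

/-! ### Independence -/

/-- Invariant subsemigroup for removing `ξ_(z,i)`. -/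
def ZRight (n : ℕ) (i : Fin n) : AddSubsemigroup (MB n) where
  carrier := {f | f (theta n) = theta n ∨ ∃ u v, f = xi (pair u v) ∧ v ≠ i}
  add_mem' := by
    rintro x y (hx | ⟨u, v, rfl, hv⟩) hy
    · left
      show x (theta n) + y (theta n) = theta n
      rw [hx, theta_add]
    · rcases hy with hy | ⟨u', v', rfl, hv'⟩
      · left
        show xi (pair u v) (theta n) + y (theta n) = theta n
        rw [hy, add_theta]
      · rw [xi_add_xi, pair_add_pair]
        by_cases h : v = u'
        · rw [if_pos h]
          exact Or.inr ⟨u, v', rfl, hv'⟩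
        · rw [if_neg h]
          exact Or.inl rfl

/-- Invariant subsemigroup for removing `ξ_(i,z)`. -/
def ZLeft (n : ℕ) (i : Fin n) : AddSubsemigroup (MB n) where
  carrier := {f | f (theta n) = theta n ∨ ∃ u v, f = xi (pair u v) ∧ u ≠ i}
  add_mem' := by
    rintro x y (hx | ⟨u, v, rfl, hv⟩) hy
    · left
      show x (theta n) + y (theta n) = theta n
      rw [hx, theta_add]
    · rcases hy with hy | ⟨u', v', rfl, hv'⟩
      · left
        show xi (pair u v) (theta n) + y (theta n) = theta n
        rw [hy, add_theta]
      · rw [xi_add_xi, pair_add_pair]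
        by_cases h : v = u'
        · rw [if_pos h]
          exact Or.inr ⟨u, v', rfl, hv⟩
        · rw [if_neg h]
          exact Or.inl rfl

theorem setT_theta {f : MB n} (hn : 1 ≤ n) (hf : f ∈ setT n) : f (theta n) = theta n := by
  obtain ⟨σ, i, rfl⟩ := (mem_setT_iff hn).mp hf
  exact nMap_apply_theta _ _ _

/-- Invariant subsemigroup for removing a `T`-element `nMap p q σ`. -/
def ZT (n : ℕ) (hn : 2 ≤ n) (p : Fin n) (σ : Perm (Fin n)) : AddSubsemigroup (MB n) where
  carrier := {f | Good n f ∧ ∀ q', f ≠ nMap p q' σ}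
  add_mem' := by
    rintro x y ⟨hx, hx2⟩ ⟨hy, hy2⟩
    refine ⟨good_add hx hy, ?_⟩
    intro q' heq
    rcases hy with ⟨c, rfl⟩ | ⟨p₁, q₁, σ₁, rfl⟩ | ⟨k, l, α, rfl⟩
    · -- y constant
      rcases hx with ⟨d, rfl⟩ | ⟨p₂, q₂, σ₂, rfl⟩ | ⟨k, l, α, rfl⟩
      · rw [xi_add_xi] at heq
        exact xi_ne_nMap _ _ _ _ heq
      · rcases brandt_cases c with rfl | ⟨u, v, rfl⟩
        · rw [add_xi_theta] at heq
          exact xi_ne_nMap _ _ _ _ heq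
        · by_cases hu : u = q₂
          · subst hu
            rw [nMap_add_xi_eq] at heq
            obtain ⟨hp, -, hσ⟩ := nMap_inj heq
            exact hx2 u (by rw [hp, hσ])
          · rw [nMap_add_xi_ne _ _ _ _ _ hu] at heq
            exact xi_ne_nMap _ _ _ _ heq
      · rw [sMap_add] at heq
        exact sMap_ne_nMap hn _ _ _ _ _ _ heq
    · -- y nMap
      rcases hx with ⟨d, rfl⟩ | ⟨p₂, q₂, σ₂, rfl⟩ | ⟨k, l, α, rfl⟩
      · rcases brandt_cases d with rfl | ⟨u, v, rfl⟩
        · rw [xi_theta_add] at heq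
          exact xi_ne_nMap _ _ _ _ heq
        · rw [xi_add_nMap] at heq
          exact sMap_ne_nMap hn _ _ _ _ _ _ heq
      · by_cases hp : p₂ = p₁
        · subst hp
          rw [nMap_add_nMap_eq] at heq
          exact sMap_ne_nMap hn _ _ _ _ _ _ heq
        · rw [nMap_add_nMap_ne _ _ _ _ _ _ hp] at heq
          exact xi_ne_nMap _ _ _ _ heq
      · rw [sMap_add] at heq
        exact sMap_ne_nMap hn _ _ _ _ _ _ heq
    · -- y sMap
      rw [add_sMap] at heq
      exact sMap_ne_nMap hn _ _ _ _ _ _ heq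

end StmtAux

/-- For `n ≥ 2`, with `S' = {ξ_(1,i) : 2 ≤ i ≤ n} ∪
{ξ_(j,1) : 2 ≤ j ≤ n}` (here `1` is modeled by the index `0` of `Fin n`),
the set `S' ∪ T` is an independent generating set of `A⁺(Bₙ)` of cardinality
`n·(n!) + 2n − 2`. -/
theorem stmt_10 (n : ℕ) (hn : 2 ≤ n) :
    ∀ S' : Set (MB n),
      S' = {f | ∃ i : Fin n, i ≠ ⟨0, by omega⟩ ∧
        (f = xi (Brandt.pair ⟨0, by omega⟩ i) ∨ f = xi (Brandt.pair i ⟨0, by omega⟩))} →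
      (S' ∪ setT n) ⊆ AplusSet n ∧
      IndepSet (S' ∪ setT n) ∧
      (AddSubsemigroup.closure (S' ∪ setT n) : Set (MB n)) = AplusSet n ∧
      (S' ∪ setT n).ncard = n * n.factorial + 2 * n - 2 := by
  open StmtAux Brandt Equiv in
  intro S' hS'
  have hn1 : 1 ≤ n := by omega
  have hnt : Nontrivial (Fin n) := Fin.nontrivial_iff_two_le.mpr hn
  set z : Fin n := ⟨0, by omega⟩ with hz
  have hSz : S' = Sprime n z := hS'
  clear hS'
  subst hSz
  have hsub : (Sprime n z ∪ setT n) ⊆ AplusSet n := by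
    rintro f (⟨i, hi, rfl | rfl⟩ | hfT)
    · exact xi_mem_Aplus _
    · exact xi_mem_Aplus _
    · obtain ⟨σ, i, rfl⟩ := (mem_setT_iff hn1).mp hfT
      exact nMap_mem_Aplus _ _ _
  refine ⟨hsub, ?_, ?_, ?_⟩
  · -- independence
    rintro a (⟨i, hi, rfl | rfl⟩ | haT)
    · -- a = ξ_(z,i)
      intro hmem
      have hle : AddSubsemigroup.closure ((Sprime n z ∪ setT n) \ {xi (pair z i)})
          ≤ ZRight n i := by
        apply AddSubsemigroup.closure_le.mpr
        rintro f ⟨⟨j, hj, rfl | rfl⟩ | hfT, hfne⟩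
        · refine Or.inr ⟨z, j, rfl, ?_⟩
          intro hji
          exact hfne (by rw [hji]; rfl)
        · exact Or.inr ⟨j, z, rfl, fun h => hi h.symm⟩
        · exact Or.inl (setT_theta hn1 hfT)
      rcases hle hmem with h | ⟨u, v, h, hv⟩
      · exact pair_ne_theta z i h
      · exact hv (pair_inj (xi_inj h)).2.symm
    · -- a = ξ_(i,z)
      intro hmem
      have hle : AddSubsemigroup.closure ((Sprime n z ∪ setT n) \ {xi (pair i z)})
          ≤ ZLeft n i := by
        apply AddSubsemigroup.closure_le.mpr
        rintro f ⟨⟨j, hj, rfl | rfl⟩ | hfT, hfne⟩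
        · exact Or.inr ⟨z, j, rfl, fun h => hi h.symm⟩
        · refine Or.inr ⟨j, z, rfl, ?_⟩
          intro hji
          exact hfne (by rw [hji]; rfl)
        · exact Or.inl (setT_theta hn1 hfT)
      rcases hle hmem with h | ⟨u, v, h, hv⟩
      · exact pair_ne_theta i z h
      · exact hv (pair_inj (xi_inj h)).1.symm
    · -- a ∈ T
      obtain ⟨σ, i, rfl⟩ := (mem_setT_iff hn1).mp haT
      intro hmem
      have hle : AddSubsemigroup.closure
          ((Sprime n z ∪ setT n) \ {nMap (σ.symm i) (finRotate n i) σ})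
          ≤ ZT n hn (σ.symm i) σ := by
        apply AddSubsemigroup.closure_le.mpr
        rintro f ⟨⟨j, hj, rfl | rfl⟩ | hfT, hfne⟩
        · exact ⟨Or.inl ⟨_, rfl⟩, fun q' => xi_ne_nMap _ _ _ _⟩
        · exact ⟨Or.inl ⟨_, rfl⟩, fun q' => xi_ne_nMap _ _ _ _⟩
        · obtain ⟨σ', i', rfl⟩ := (mem_setT_iff hn1).mp hfT
          refine ⟨Or.inr (Or.inl ⟨_, _, _, rfl⟩), ?_⟩
          intro q' heq
          obtain ⟨hp, hq, hσ⟩ := nMap_inj heq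
          subst hσ
          have hii : i' = i := σ'.symm.injective hp
          subst hii
          exact hfne rfl
      exact (hle hmem).2 (finRotate n i) rfl
  · -- generation
    apply Set.Subset.antisymm
    · intro f hf
      exact (AddSubsemigroup.closure_le.mpr hsub : _ ≤ Aplus n) hf
    · intro f hf
      have hgood : Good n f := by
        rw [aplusSet_eq] at hf
        exact hf
      exact good_mem_closure z hn hgood
  · -- cardinality
    have hdisj : Disjoint (Sprime n z) (setT n) := by
      rw [Set.disjoint_left]
      rintro f ⟨i, hi, rfl | rfl⟩ hfT
      · exact pair_ne_theta z i (setT_theta hn1 hfT)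
      · exact pair_ne_theta i z (setT_theta hn1 hfT)
    have hIcard : {i : Fin n | i ≠ z}.ncard = n - 1 := by
      have he : {i : Fin n | i ≠ z} = Set.univ \ {z} := by
        ext x
        simp
      rw [he, Set.ncard_diff_singleton_of_mem (Set.mem_univ z), Set.ncard_univ]
      simp [Nat.card_eq_fintype_card]
    have hScard : (Sprime n z).ncard = (n - 1) + (n - 1) := by
      have hrepr : Sprime n z
          = (fun i : Fin n => (xi (pair z i) : MB n)) '' {i | i ≠ z}
            ∪ (fun i : Fin n => (xi (pair i z) : MB n)) '' {i | i ≠ z} := by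
        ext f
        constructor
        · rintro ⟨i, hi, rfl | rfl⟩
          · exact Or.inl ⟨i, hi, rfl⟩
          · exact Or.inr ⟨i, hi, rfl⟩
        · rintro (⟨i, hi, rfl⟩ | ⟨i, hi, rfl⟩)
          · exact ⟨i, hi, Or.inl rfl⟩
          · exact ⟨i, hi, Or.inr rfl⟩
      have hinj1 : Function.Injective (fun i : Fin n => (xi (pair z i) : MB n)) := by
        intro i j h
        exact (pair_inj (xi_inj h)).2
      have hinj2 : Function.Injective (fun i : Fin n => (xi (pair i z) : MB n)) := by
        intro i j h
        exact (pair_inj (xi_inj h)).1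
      have hdisj2 : Disjoint ((fun i : Fin n => (xi (pair z i) : MB n)) '' {i | i ≠ z})
          ((fun i : Fin n => (xi (pair i z) : MB n)) '' {i | i ≠ z}) := by
        rw [Set.disjoint_left]
        rintro f ⟨i, hi, rfl⟩ ⟨j, hj, hf⟩
        exact hj (pair_inj (xi_inj hf)).1
      rw [hrepr, Set.ncard_union_eq hdisj2, Set.ncard_image_of_injective _ hinj1,
        Set.ncard_image_of_injective _ hinj2, hIcard]
    have hTcard : (setT n).ncard = n.factorial * n := by
      have hrepr : setT n = Set.range (fun x : Equiv.Perm (Fin n) × Fin n =>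
          nMap (x.1.symm x.2) (finRotate n x.2) x.1) := by
        ext f
        rw [mem_setT_iff hn1]
        constructor
        · rintro ⟨σ, i, rfl⟩
          exact ⟨(σ, i), rfl⟩
        · rintro ⟨⟨σ, i⟩, rfl⟩
          exact ⟨σ, i, rfl⟩
      have hinjF : Function.Injective (fun x : Equiv.Perm (Fin n) × Fin n =>
          nMap (x.1.symm x.2) (finRotate n x.2) x.1) := by
        rintro ⟨σ, i⟩ ⟨σ', i'⟩ h
        obtain ⟨hp, hq, hσ⟩ := nMap_inj h
        have hii : i = i' := (finRotate n).injective hq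
        subst hσ
        subst hii
        rfl
      rw [hrepr, ← Set.image_univ, Set.ncard_image_of_injective _ hinjF, Set.ncard_univ]
      simp [Nat.card_eq_fintype_card, Fintype.card_perm]
    rw [Set.ncard_union_eq hdisj, hScard, hTcard, Nat.mul_comm n.factorial n]
    have h1 : 1 ≤ n.factorial := Nat.factorial_pos n
    generalize n * n.factorial = m
    omega
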